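/- Assume V ≥ 0 and let μ be a good positive bounded Radon measure on ∂Ω. The following are equivalent: (i) μ(Z_V) = 0; (ii) there exists an increasing sequence of positive admissible measures {μ_n} which converges to μ in the weak* topology. -/

import Mathlib

/- Common setup for the formalization of
   "Boundary value problems with measures for elliptic equations with singular potentials"
   by L. Véron and C. Yarur.

   Ω ⊂ ℝ^N is a bounded C² domain, V ∈ L^∞_loc(Ω) is a (nonnegative) potential,
   ρ is the first eigenfunction of -Δ in W₀^{1,2}(Ω), K = K^Ω is the Poisson kernel of Ω,
   nrm is the outward unit normal field on ∂Ω. -/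

noncomputable section

open MeasureTheory Metric Set Filter Topology ENNReal

/-- Euclidean space ℝ^N. -/
abbrev Euc (N : ℕ) := EuclideanSpace ℝ (Fin N)

variable {N : ℕ}

/-- The Laplacian Δf(x), computed as the trace of the second derivative on the
standard orthonormal basis. -/
def lap (f : Euc N → ℝ) (x : Euc N) : ℝ :=
  ∑ i : Fin N,
    iteratedFDeriv ℝ 2 f x ![EuclideanSpace.single i (1 : ℝ), EuclideanSpace.single i (1 : ℝ)]

/-- A bounded open set with C² boundary: near every boundary point, Ω is the sublevel
set of a C² function with nonvanishing gradient. -/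
def IsC2Domain (Ω : Set (Euc N)) : Prop :=
  IsOpen Ω ∧ Bornology.IsBounded Ω ∧ Ω.Nonempty ∧
  ∀ z ∈ frontier Ω, ∃ U : Set (Euc N), IsOpen U ∧ z ∈ U ∧
    ∃ f : Euc N → ℝ, ContDiffOn ℝ 2 f U ∧
      (∀ x ∈ U, (x ∈ Ω ↔ f x < 0) ∧ (x ∈ frontier Ω ↔ f x = 0)) ∧
      ∀ x ∈ U, fderiv ℝ f x ≠ 0

/-- The outward unit normal field on ∂Ω. -/
def IsOuterNormal (Ω : Set (Euc N)) (nrm : Euc N → Euc N) : Prop :=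
  ∀ y ∈ frontier Ω, ‖nrm y‖ = 1 ∧ ∀ᶠ t in 𝓝[>] (0 : ℝ), y + t • nrm y ∉ closure Ω

/-- The normal derivative ∂ζ/∂n of ζ at a boundary point y. -/
def normalDeriv (Ω : Set (Euc N)) (nrm : Euc N → Euc N) (ζ : Euc N → ℝ) (y : Euc N) : ℝ :=
  fderivWithin ℝ ζ (closure Ω) y (nrm y)

/-- Test functions for the weak formulation: ζ ∈ C¹(Ω̄), ζ = 0 on ∂Ω, Δζ ∈ L^∞(Ω). -/
def IsTestFun (Ω : Set (Euc N)) (ζ : Euc N → ℝ) : Prop :=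
  ContDiffOn ℝ 1 ζ (closure Ω) ∧ (∀ y ∈ frontier Ω, ζ y = 0) ∧
  ∃ C : ℝ, ∀ x ∈ Ω, |lap ζ x| ≤ C

/-- V ∈ L^∞_loc(Ω). -/
def LocBddOn (Ω : Set (Euc N)) (V : Euc N → ℝ) : Prop :=
  ∀ K : Set (Euc N), K ⊆ Ω → IsCompact K → ∃ C : ℝ, ∀ x ∈ K, |V x| ≤ C

/-- ρ is the (positive, normalized up to a constant) first eigenfunction of -Δ in
W₀^{1,2}(Ω), with eigenvalue lam > 0. -/
def IsFirstEigenfunction (Ω : Set (Euc N)) (ρ : Euc N → ℝ) : Prop :=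
  ∃ lam : ℝ, 0 < lam ∧ ContinuousOn ρ (closure Ω) ∧ ContDiffOn ℝ 2 ρ Ω ∧
    (∀ x ∈ Ω, 0 < ρ x) ∧ (∀ y ∈ frontier Ω, ρ y = 0) ∧
    ∀ x ∈ Ω, - lap ρ x = lam * ρ x

/-- A bounded (Radon) measure on ∂Ω: a finite measure concentrated on the boundary. -/
def BoundaryMeasure (Ω : Set (Euc N)) (μ : Measure (Euc N)) : Prop :=
  IsFiniteMeasure μ ∧ μ (frontier Ω)ᶜ = 0

/-- u is a weak solution of -Δu + Vu = 0 in Ω, u = μ on ∂Ω (μ a positive bounded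
measure on ∂Ω): u ∈ L¹(Ω), Vu ∈ L¹_ρ(Ω) and
∫_Ω (-uΔζ + Vuζ) = -∫_{∂Ω} (∂ζ/∂n) dμ for every test function ζ. -/
def IsWeakSolution (Ω : Set (Euc N)) (V ρ : Euc N → ℝ) (nrm : Euc N → Euc N)
    (μ : Measure (Euc N)) (u : Euc N → ℝ) : Prop :=
  IntegrableOn u Ω volume ∧
  IntegrableOn (fun x => V x * u x * ρ x) Ω volume ∧
  ∀ ζ : Euc N → ℝ, IsTestFun Ω ζ →
    ∫ x in Ω, (-(u x) * lap ζ x + V x * u x * ζ x) =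
      - ∫ y, normalDeriv Ω nrm ζ y ∂μ

/-- Weak solution for a signed boundary measure μ = μp - μm. -/
def IsWeakSolutionSigned (Ω : Set (Euc N)) (V ρ : Euc N → ℝ) (nrm : Euc N → Euc N)
    (μp μm : Measure (Euc N)) (u : Euc N → ℝ) : Prop :=
  IntegrableOn u Ω volume ∧
  IntegrableOn (fun x => V x * u x * ρ x) Ω volume ∧
  ∀ ζ : Euc N → ℝ, IsTestFun Ω ζ →
    ∫ x in Ω, (-(u x) * lap ζ x + V x * u x * ζ x) =
      - (∫ y, normalDeriv Ω nrm ζ y ∂μp - ∫ y, normalDeriv Ω nrm ζ y ∂μm)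

/-- μ is a good measure: the boundary value problem with data μ admits a weak solution. -/
def GoodMeasure (Ω : Set (Euc N)) (V ρ : Euc N → ℝ) (nrm : Euc N → Euc N)
    (μ : Measure (Euc N)) : Prop :=
  ∃ u : Euc N → ℝ, IsWeakSolution Ω V ρ nrm μ u

/-- The Poisson potential 𝕂[μ](x) = ∫_{∂Ω} K(x,y) dμ(y), as an extended real. -/
def poissonPot (K : Euc N → Euc N → ℝ) (μ : Measure (Euc N)) (x : Euc N) : ℝ≥0∞ :=
  ∫⁻ y, ENNReal.ofReal (K x y) ∂μ

/-- K is the Poisson kernel of the operator -Δ + W in Ω: K ≥ 0, K(x,·) is continuous on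
∂Ω, and for every bounded measure μ on ∂Ω the function x ↦ ∫_{∂Ω} K(x,y) dμ(y)
is the weak solution of -Δu + Wu = 0, u = μ on ∂Ω.  (`W = 0` gives the usual
Poisson kernel K^Ω of Ω.) -/
def IsPoissonKernelFor (Ω : Set (Euc N)) (W ρ : Euc N → ℝ) (nrm : Euc N → Euc N)
    (K : Euc N → Euc N → ℝ) : Prop :=
  (∀ x ∈ Ω, ∀ y ∈ frontier Ω, 0 ≤ K x y) ∧
  (∀ x ∈ Ω, ContinuousOn (fun y => K x y) (frontier Ω)) ∧
  ∀ μ : Measure (Euc N), BoundaryMeasure Ω μ →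
    IsWeakSolution Ω W ρ nrm μ (fun x => ∫ y, K x y ∂μ)

/-- A positive measure μ on ∂Ω is admissible: ∫_Ω 𝕂[μ] V ρ dx < ∞. -/
def Admissible (Ω : Set (Euc N)) (V ρ : Euc N → ℝ) (K : Euc N → Euc N → ℝ)
    (μ : Measure (Euc N)) : Prop :=
  ∫⁻ x in Ω, poissonPot K μ x * ENNReal.ofReal (V x * ρ x) < ⊤

/-- The singular boundary set Z_V = {y ∈ ∂Ω : ∫_Ω K^Ω(x,y) V(x) ρ(x) dx = ∞}. -/
def ZV (Ω : Set (Euc N)) (V ρ : Euc N → ℝ) (K : Euc N → Euc N → ℝ) : Set (Euc N) :=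
  {y | y ∈ frontier Ω ∧ ∫⁻ x in Ω, ENNReal.ofReal (K x y * V x * ρ x) = ⊤}

/-- Uniform vanishing condition (2.19): ∫_E K^Ω(x,y) V(x) ρ(x) dx → 0 as |E| → 0,
uniformly with respect to y ∈ ∂Ω. -/
def UnifVanishing (Ω : Set (Euc N)) (V ρ : Euc N → ℝ) (K : Euc N → Euc N → ℝ) : Prop :=
  ∀ ε : ℝ, 0 < ε → ∃ δ : ℝ, 0 < δ ∧ ∀ E : Set (Euc N), E ⊆ Ω → MeasurableSet E →
    volume E < ENNReal.ofReal δ →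
    ∀ y ∈ frontier Ω, ∫⁻ x in E, ENNReal.ofReal (K x y * V x * ρ x) < ENNReal.ofReal ε

/-- G is the Green kernel of -Δ in Ω: G ≥ 0, symmetric, and u = 𝔾[f] satisfies
-Δu = f, u = 0 on ∂Ω weakly, for nonnegative data f. -/
def IsGreenKernel (Ω : Set (Euc N)) (G : Euc N → Euc N → ℝ) : Prop :=
  (∀ x y, 0 ≤ G x y) ∧ (∀ x y, G x y = G y x) ∧
  ∀ f : Euc N → ℝ, (∀ x, 0 ≤ f x) →
    IntegrableOn (fun x => ∫ y in Ω, G x y * f y) Ω volume →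
    IntegrableOn f Ω volume →
    ∀ ζ : Euc N → ℝ, IsTestFun Ω ζ →
      ∫ x in Ω, -(∫ y in Ω, G x y * f y) * lap ζ x = ∫ x in Ω, f x * ζ x

/-- KV = K_V^Ω is the relaxed kernel of -Δ + V in Ω: the decreasing limit of the Poisson
kernels of -Δ + Vχ_{Ω_n}, for an increasing exhaustion {Ω_n} of Ω by smooth domains
with closures contained in Ω. -/
def IsRelaxedKernel (Ω : Set (Euc N)) (V ρ : Euc N → ℝ) (nrm : Euc N → Euc N)
    (KV : Euc N → Euc N → ℝ) : Prop :=
  ∃ Ωn : ℕ → Set (Euc N),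
    (∀ n, IsOpen (Ωn n) ∧ closure (Ωn n) ⊆ Ωn (n + 1) ∧ closure (Ωn n) ⊆ Ω) ∧
    (⋃ n, Ωn n) = Ω ∧
    ∃ Kn : ℕ → Euc N → Euc N → ℝ,
      (∀ n, IsPoissonKernelFor Ω ((Ωn n).indicator V) ρ nrm (Kn n)) ∧
      (∀ x ∈ Ω, ∀ y ∈ frontier Ω, Antitone fun n => Kn n x y) ∧
      (∀ x ∈ Ω, ∀ y ∈ frontier Ω, Tendsto (fun n => Kn n x y) atTop (𝓝 (KV x y)))

/-- ν* is the reduced measure associated to ν: the boundary trace of the nonnegative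
harmonic function 𝕂_V[ν] + 𝔾[V 𝕂_V[ν]], i.e. the bounded measure ν* on ∂Ω with
𝕂_V[ν] + 𝔾[V 𝕂_V[ν]] = 𝕂[ν*] in Ω. -/
def IsReducedMeasure (Ω : Set (Euc N)) (V : Euc N → ℝ) (K G KV : Euc N → Euc N → ℝ)
    (ν νstar : Measure (Euc N)) : Prop :=
  BoundaryMeasure Ω νstar ∧
  ∀ x ∈ Ω, (∫ y, KV x y ∂ν) + (∫ y in Ω, G x y * V y * (∫ z, KV y z ∂ν)) =
    ∫ y, K x y ∂νstar

/-- The vanishing set Z_V^* of the kernel K_V^Ω (independent of x ∈ Ω by Harnack). -/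
def ZVstar (Ω : Set (Euc N)) (KV : Euc N → Euc N → ℝ) : Set (Euc N) :=
  {y | y ∈ frontier Ω ∧ ∀ x ∈ Ω, KV x y = 0}

/-- u ∈ C(Ω) is a positive solution of -Δu + Vu = 0 in Ω (in the sense of
distributions). -/
def IsPositiveSolution (Ω : Set (Euc N)) (V u : Euc N → ℝ) : Prop :=
  ContinuousOn u Ω ∧ (∀ x ∈ Ω, 0 < u x) ∧
  ∀ ζ : Euc N → ℝ, ContDiff ℝ (⊤ : ℕ∞) ζ → HasCompactSupport ζ → tsupport ζ ⊆ Ω →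
    ∫ x in Ω, (-(u x) * lap ζ x + V x * u x * ζ x) = 0

/-- z ∈ ∂Ω is a regular boundary point of u: ∫_{U∩Ω} V u ρ dx < ∞ for some
neighborhood U of z. -/
def IsRegularPoint (Ω : Set (Euc N)) (V ρ u : Euc N → ℝ) (z : Euc N) : Prop :=
  z ∈ frontier Ω ∧ ∃ U : Set (Euc N), IsOpen U ∧ z ∈ U ∧
    ∫⁻ x in U ∩ Ω, ENNReal.ofReal (V x * u x * ρ x) < ⊤

/-- The set R(u) of regular boundary points of u. -/
def regSet (Ω : Set (Euc N)) (V ρ u : Euc N → ℝ) : Set (Euc N) :=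
  {z | IsRegularPoint Ω V ρ u z}

/-- The singular boundary set S(u) = ∂Ω ∖ R(u). -/
def singSet (Ω : Set (Euc N)) (V ρ u : Euc N → ℝ) : Set (Euc N) :=
  frontier Ω \ regSet Ω V ρ u

/-- Σ_ε = {x ∈ Ω : dist(x,∂Ω) = ε}. -/
def SigmaSet (Ω : Set (Euc N)) (ε : ℝ) : Set (Euc N) :=
  {x | x ∈ Ω ∧ infDist x (frontier Ω) = ε}

/-- σ is the projection onto ∂Ω, defined (and unique) for points at distance ≤ ε₀ from
the boundary. -/
def IsBoundaryProjection (Ω : Set (Euc N)) (ε₀ : ℝ) (σ : Euc N → Euc N) : Prop :=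
  ∀ x ∈ Ω, infDist x (frontier Ω) ≤ ε₀ →
    σ x ∈ frontier Ω ∧ dist x (σ x) = infDist x (frontier Ω)

/-- γ is the boundary trace of v : for every ζ ∈ C(∂Ω),
∫_{Σ_ε} ζ(σ(x)) v(x) dS(x) → ∫_{∂Ω} ζ dγ as ε → 0, where dS is the surface
((N-1)-dimensional Hausdorff) measure. -/
def HasBoundaryTrace (Ω : Set (Euc N)) (σ : Euc N → Euc N) (v : Euc N → ℝ)
    (γ : Measure (Euc N)) : Prop :=
  BoundaryMeasure Ω γ ∧
  ∀ ζ : Euc N → ℝ, Continuous ζ →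
    Tendsto (fun ε : ℝ => ∫ x in SigmaSet Ω ε, ζ (σ x) * v x ∂(μH[(N : ℝ) - 1]))
      (𝓝[>] 0) (𝓝 (∫ z, ζ z ∂γ))

/-- μu is the regular part of the boundary trace of u: a Radon measure on R(u)
(finite on compact subsets of R(u), vanishing outside R(u)) such that
∫_{Σ_ε} ζ(σ(x)) u(x) dS(x) → ∫ ζ dμu for every ζ ∈ C_c(R(u)). -/
def IsRegularTrace (Ω : Set (Euc N)) (V ρ u : Euc N → ℝ) (σ : Euc N → Euc N)
    (μu : Measure (Euc N)) : Prop :=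
  μu (regSet Ω V ρ u)ᶜ = 0 ∧
  (∀ Kc : Set (Euc N), IsCompact Kc → Kc ⊆ regSet Ω V ρ u → μu Kc < ⊤) ∧
  ∀ ζ : Euc N → ℝ, Continuous ζ →
    closure {z | z ∈ frontier Ω ∧ ζ z ≠ 0} ⊆ regSet Ω V ρ u →
    Tendsto (fun ε : ℝ => ∫ x in SigmaSet Ω ε, ζ (σ x) * u x ∂(μH[(N : ℝ) - 1]))
      (𝓝[>] 0) (𝓝 (∫ z, ζ z ∂μu))

/-- The sweeping measure ν_S(A) = sup{γ_u(μ)(A) : μ ∈ 𝔐₊(S(u)) good}, where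
γ_u(μ) is the boundary trace of v_μ = min{u, u_μ}. -/
def nuS (Ω : Set (Euc N)) (V ρ : Euc N → ℝ) (nrm σ : Euc N → Euc N) (u : Euc N → ℝ)
    (A : Set (Euc N)) : ℝ≥0∞ :=
  ⨆ (μ : Measure (Euc N)) (_ : BoundaryMeasure Ω μ) (_ : μ (singSet Ω V ρ u)ᶜ = 0)
    (uμ : Euc N → ℝ) (_ : IsWeakSolution Ω V ρ nrm μ uμ)
    (γ : Measure (Euc N)) (_ : HasBoundaryTrace Ω σ (fun x => min (u x) (uμ x)) γ),
      γ A

open scoped BoundedContinuousFunction NNReal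
open TopologicalSpace

/-! Write `w = (Vρ)⁺` and `F(y) = ∫_Ω K(x,y) w(x) dx`, so that `Z_V = {F = ∞}`. By Tonelli,
`∫_Ω 𝕂[ν] w = ∫_{∂Ω} F dν` for every bounded boundary measure `ν`; thus `ν` is admissible exactly
when `∫ F dν < ∞`. Since `V` is not assumed measurable, Tonelli is applied to the measure
`w · dx` on `Ω`, whose integrals agree with the weighted lower integrals.

If `F < ∞` `μ`-a.e., the restrictions of `μ` to `{F ≤ n}` are admissible and increase to `μ`.
Conversely, an increasing sequence converging weakly to `μ` has `μ` as its setwise supremum, so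
`{F = ∞}`, being null for every `μₙ`, is `μ`-null. -/

theorem ENNReal.tsum_iSup_eq_iSup_tsum {ι : Type*} {a : ι → ℕ → ℝ≥0∞}
    (ha : ∀ i, Monotone (a i)) : ∑' i, ⨆ n, a i n = ⨆ n, ∑' i, a i n := by
  refine le_antisymm ?_ (iSup_le fun n => ENNReal.tsum_le_tsum fun i => le_iSup (a i) n)
  rw [ENNReal.tsum_eq_iSup_sum]
  refine iSup_le fun s => ?_
  rw [ENNReal.finsetSum_iSup_of_monotone ha]
  exact iSup_mono fun n => ENNReal.sum_le_tsum s

namespace MeasureTheory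

variable {α : Type*} [MeasurableSpace α]

theorem lintegral_mul_eq_lintegral_withDensity {μ : Measure α} [SFinite μ] (g : α → ℝ≥0∞)
    {h : α → ℝ≥0∞} (hh : AEMeasurable h μ) (hh_fin : ∀ᵐ x ∂μ, h x < ∞) :
    ∫⁻ x, h x * g x ∂μ = ∫⁻ x, h x ∂μ.withDensity g := by
  apply le_antisymm
  · refine (lintegral_withDensity_eq_lintegral_mul_non_measurable₀ μ hh hh_fin g).ge.trans ?_
    rw [← iSup_lintegral_measurable_le_eq_lintegral]
    refine iSup₂_le fun i hi => iSup_le fun hig => ?_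
    calc ∫⁻ x, i x ∂μ.withDensity h = ∫⁻ x, h x ∂μ.withDensity i := by
          rw [lintegral_withDensity_eq_lintegral_mul₀ hh hi.aemeasurable,
            lintegral_withDensity_eq_lintegral_mul₀ hi.aemeasurable hh]
          simp only [Pi.mul_apply, mul_comm]
      _ ≤ ∫⁻ x, h x ∂μ.withDensity g :=
          lintegral_mono' (withDensity_mono (ae_of_all _ hig)) le_rfl
  · obtain ⟨g', hg', hg'g, hwd⟩ := exists_measurable_le_withDensity_eq μ g
    rw [← hwd, lintegral_withDensity_eq_lintegral_mul₀ hg'.aemeasurable hh]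
    exact lintegral_mono fun x => by rw [Pi.mul_apply, mul_comm]; gcongr; exact hg'g x

theorem exists_monotone_lintegral_lt_top_tendsto_integral {μ : Measure α} [IsFiniteMeasure μ]
    {F : α → ℝ≥0∞} (hF : AEMeasurable F μ) (hF_fin : ∀ᵐ x ∂μ, F x < ∞) :
    ∃ μs : ℕ → Measure α, Monotone μs ∧ (∀ n, μs n ≤ μ) ∧ (∀ n, ∫⁻ x, F x ∂μs n < ∞) ∧
      ∀ f : α → ℝ, Integrable f μ →
        Tendsto (fun n => ∫ x, f x ∂μs n) atTop (𝓝 (∫ x, f x ∂μ)) := by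
  set S : ℕ → Set α := fun n => {x | hF.mk F x ≤ n}
  have hS_meas : ∀ n, MeasurableSet (S n) := fun n =>
    measurableSet_le hF.measurable_mk measurable_const
  have hS_mono : Monotone S := fun m n hmn x hx =>
    le_trans (α := ℝ≥0∞) hx (Nat.cast_le.2 hmn)
  have hS_ae : ∀ᵐ x ∂μ, x ∈ ⋃ n, S n := by
    filter_upwards [hF_fin, hF.ae_eq_mk] with x hx hxmk
    obtain ⟨n, hn⟩ := ENNReal.exists_nat_gt (hxmk ▸ hx).ne
    exact mem_iUnion.2 ⟨n, hn.le⟩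
  refine ⟨fun n => μ.restrict (S n), fun m n hmn => Measure.restrict_mono (hS_mono hmn) le_rfl,
    fun n => Measure.restrict_le_self, fun n => ?_, fun f hf => ?_⟩
  · calc ∫⁻ x in S n, F x ∂μ = ∫⁻ x in S n, hF.mk F x ∂μ :=
          lintegral_congr_ae (ae_restrict_of_ae hF.ae_eq_mk)
      _ ≤ ∫⁻ _ in S n, (n : ℝ≥0∞) ∂μ := setLIntegral_mono measurable_const fun x hx => hx
      _ < ∞ := by
          rw [setLIntegral_const]
          exact ENNReal.mul_lt_top (ENNReal.natCast_lt_top n) (measure_lt_top μ _)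
  · have := tendsto_setIntegral_of_monotone hS_meas hS_mono hf.integrableOn
    rwa [Measure.restrict_eq_self_of_ae_mem hS_ae] at this

namespace Measure

noncomputable def supOfMonotone (μs : ℕ → Measure α) (hμs : Monotone μs) : Measure α :=
  ofMeasurable (fun s _ => ⨆ n, μs n s) (by simp) fun s hs hd => by
    simp only [measure_iUnion hd hs]
    exact (ENNReal.tsum_iSup_eq_iSup_tsum fun i _ _ hnm => hμs hnm (s i)).symm

variable {μs : ℕ → Measure α} (hμs : Monotone μs)

theorem supOfMonotone_apply {s : Set α} (hs : MeasurableSet s) :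
    supOfMonotone μs hμs s = ⨆ n, μs n s :=
  ofMeasurable_apply s hs

theorem lintegral_supOfMonotone {f : α → ℝ≥0∞} (hf : Measurable f) :
    ∫⁻ x, f x ∂supOfMonotone μs hμs = ⨆ n, ∫⁻ x, f x ∂μs n := by
  have simple : ∀ φ : SimpleFunc α ℝ≥0∞,
      φ.lintegral (supOfMonotone μs hμs) = ⨆ n, φ.lintegral (μs n) := by
    intro φ
    simp only [SimpleFunc.lintegral, supOfMonotone_apply hμs (φ.measurableSet_fiber _),
      ENNReal.mul_iSup]
    exact ENNReal.finsetSum_iSup_of_monotone fun c _ _ hnm => by gcongr; exact hμs hnm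
  simp only [lintegral_eq_iSup_eapprox_lintegral hf, simple]
  exact iSup_comm

theorem ae_supOfMonotone {p : α → Prop} (hp : ∀ n, ∀ᵐ x ∂μs n, p x) :
    ∀ᵐ x ∂supOfMonotone μs hμs, p x := by
  rw [ae_iff]
  have ht : MeasurableSet (⋂ n, toMeasurable (μs n) {x | ¬p x}) :=
    MeasurableSet.iInter fun n => measurableSet_toMeasurable _ _
  refine measure_mono_null (subset_iInter fun n => subset_toMeasurable (μs n) _) ?_
  rw [supOfMonotone_apply hμs ht, ENNReal.iSup_eq_zero]
  exact fun n => measure_mono_null (iInter_subset _ n) ((measure_toMeasurable _).trans (hp n))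

theorem supOfMonotone_eq_of_tendsto_integral {X : Type*} [TopologicalSpace X]
    [MeasurableSpace X] [HasOuterApproxClosed X] [BorelSpace X] {μs : ℕ → Measure X}
    (hμs : Monotone μs) [∀ n, IsFiniteMeasure (μs n)] {μ : Measure X} [IsFiniteMeasure μ]
    (h : ∀ f : X →ᵇ ℝ≥0,
      Tendsto (fun n => ∫ x, (f x : ℝ) ∂μs n) atTop (𝓝 (∫ x, (f x : ℝ) ∂μ))) :
    supOfMonotone μs hμs = μ := by
  refine (ext_of_forall_lintegral_eq_of_IsFiniteMeasure fun f => ?_).symm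
  have ofReal_integral : ∀ (ν : Measure X) [IsFiniteMeasure ν],
      ENNReal.ofReal (∫ x, (f x : ℝ) ∂ν) = ∫⁻ x, f x ∂ν := fun ν _ => by
    rw [← BoundedContinuousFunction.toReal_lintegral_coe_eq_integral, ENNReal.ofReal_toReal
      (BoundedContinuousFunction.lintegral_lt_top_of_nnreal ν f).ne]
  have lim : Tendsto (fun n => ∫⁻ x, f x ∂μs n) atTop (𝓝 (∫⁻ x, f x ∂μ)) := by
    simpa only [Function.comp_def, ofReal_integral] using
      (ENNReal.continuous_ofReal.tendsto _).comp (h f)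
  rw [lintegral_supOfMonotone hμs f.continuous.measurable.coe_nnreal_ennreal]
  exact tendsto_nhds_unique lim
    (tendsto_atTop_iSup fun m n hmn => lintegral_mono' (hμs hmn) le_rfl)

end Measure

theorem aemeasurable_uncurry_of_continuousOn {X Y : Type*} [MeasurableSpace X]
    [PseudoEMetricSpace Y] [MeasurableSpace Y] [OpensMeasurableSpace Y]
    {μ : Measure X} {ν : Measure Y} {s : Set X} {S : Set Y} [SeparableSpace S]
    (hs : ∀ᵐ x ∂μ, x ∈ s) (hS : ∀ᵐ y ∂ν, y ∈ S) {u : X → Y → ℝ}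
    (hu_cont : ∀ x ∈ s, ContinuousOn (u x) S)
    (hu_meas : ∀ y ∈ S, AEMeasurable (fun x => u x y) μ) :
    AEMeasurable (Function.uncurry u) (μ.prod ν) := by
  classical
  rcases S.eq_empty_or_nonempty with rfl | ⟨y₀, hy₀⟩
  · simp only [mem_empty_iff_false, ae_iff, not_false_eq_true, ofPred_true,
      Measure.measure_univ_eq_zero] at hS
    simp [hS]
  set c : ℕ → SimpleFunc Y Y := SimpleFunc.approxOn id measurable_id S y₀ hy₀
  have hc_mem : ∀ n y, c n y ∈ S := SimpleFunc.approxOn_mem measurable_id hy₀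
  have hc_meas : ∀ n, AEMeasurable (fun p : X × Y => u p.1 (c n p.2)) (μ.prod ν) := by
    intro n
    have sum_eq : (fun p : X × Y => u p.1 (c n p.2)) = fun p =>
        ∑ z ∈ (c n).range, (Prod.snd ⁻¹' (c n ⁻¹' {z})).indicator (fun q => u q.1 z) p := by
      ext p
      simp [Set.indicator_apply, (c n).mem_range_self]
    rw [sum_eq]
    refine Finset.aemeasurable_fun_sum _ fun z hz => ?_
    obtain ⟨y, rfl⟩ := SimpleFunc.mem_range.1 hz
    exact (hu_meas _ (hc_mem n y)).comp_fst.indicator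
      (measurable_snd ((c n).measurableSet_fiber _))
  refine aemeasurable_of_tendsto_metrizable_ae' hc_meas ?_
  filter_upwards [Measure.quasiMeasurePreserving_fst.ae hs,
    Measure.quasiMeasurePreserving_snd.ae hS] with p hp1 hp2
  have hc_lim : Tendsto (fun n => c n p.2) atTop (𝓝[S] p.2) :=
    tendsto_nhdsWithin_iff.2
      ⟨SimpleFunc.tendsto_approxOn measurable_id hy₀ (subset_closure hp2),
        Eventually.of_forall fun n => hc_mem n p.2⟩
  exact ((hu_cont p.1 hp1).continuousWithinAt hp2).tendsto.comp hc_lim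

end MeasureTheory

variable {N : ℕ} {Ω : Set (Euc N)}

theorem BoundaryMeasure.ae_mem_frontier {ν : Measure (Euc N)} (hν : BoundaryMeasure Ω ν) :
    ∀ᵐ y ∂ν, y ∈ frontier Ω :=
  hν.2

theorem BoundaryMeasure.mono {μ ν : Measure (Euc N)} (hμ : BoundaryMeasure Ω μ) (hνμ : ν ≤ μ) :
    BoundaryMeasure Ω ν :=
  ⟨@isFiniteMeasure_of_le _ _ _ _ hμ.1 hνμ,
    nonpos_iff_eq_zero.1 ((Measure.le_iff'.1 hνμ _).trans_eq hμ.2)⟩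

theorem boundaryMeasure_dirac {y : Euc N} (hy : y ∈ frontier Ω) :
    BoundaryMeasure Ω (Measure.dirac y) :=
  ⟨inferInstance, by simp [Measure.dirac_apply' _ isClosed_frontier.measurableSet.compl, hy]⟩

theorem BoundaryMeasure.integrable_of_continuousOn (hΩ : Bornology.IsBounded Ω)
    {ν : Measure (Euc N)} (hν : BoundaryMeasure Ω ν) {f : Euc N → ℝ}
    (hf : ContinuousOn f (frontier Ω)) : Integrable f ν := by
  have := hν.1
  have hcpt : IsCompact (frontier Ω) :=
    hΩ.isCompact_closure.of_isClosed_subset isClosed_frontier frontier_subset_closure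
  have := hf.integrableOn_compact (μ := ν) hcpt
  rwa [IntegrableOn, Measure.restrict_eq_self_of_ae_mem hν.ae_mem_frontier] at this

theorem measure_ZV_eq_zero_iff {V ρ : Euc N → ℝ} {K : Euc N → Euc N → ℝ} {ν : Measure (Euc N)}
    (hν : BoundaryMeasure Ω ν) :
    ν (ZV Ω V ρ K) = 0 ↔ ∀ᵐ y ∂ν, ∫⁻ x in Ω, ENNReal.ofReal (K x y * (V x * ρ x)) < ∞ := by
  rw [measure_eq_zero_iff_ae_notMem]
  refine eventually_congr (hν.ae_mem_frontier.mono fun y hy => ?_)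
  simp [ZV, hy, mul_assoc, lt_top_iff_ne_top]

namespace IsPoissonKernelFor

variable {W ρ : Euc N → ℝ} {nrm : Euc N → Euc N} {K : Euc N → Euc N → ℝ}
  (hK : IsPoissonKernelFor Ω W ρ nrm K)
include hK

theorem aemeasurable_left {y : Euc N} (hy : y ∈ frontier Ω) :
    AEMeasurable (fun x => K x y) (volume.restrict Ω) := by
  simpa [integral_dirac] using (hK.2.2 _ (boundaryMeasure_dirac hy)).1.aemeasurable

theorem poissonPot_lt_top (hΩ : Bornology.IsBounded Ω) {ν : Measure (Euc N)}
    (hν : BoundaryMeasure Ω ν) {x : Euc N} (hx : x ∈ Ω) : poissonPot K ν x < ∞ :=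
  (hν.integrable_of_continuousOn hΩ (hK.2.1 x hx)).lintegral_lt_top

theorem aemeasurable_ofReal_uncurry (hΩ : IsOpen Ω) {ν : Measure (Euc N)}
    (hν : BoundaryMeasure Ω ν) {μ : Measure (Euc N)} (hμ : μ ≪ volume.restrict Ω) :
    AEMeasurable (fun p : Euc N × Euc N => ENNReal.ofReal (K p.1 p.2)) (μ.prod ν) :=
  (aemeasurable_uncurry_of_continuousOn (hμ.ae_le (ae_restrict_mem hΩ.measurableSet))
    hν.ae_mem_frontier hK.2.1 fun _ hy => (hK.aemeasurable_left hy).mono_ac hμ).ennreal_ofReal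

theorem setLIntegral_ofReal_mul_eq_lintegral_withDensity (hΩ : IsOpen Ω) {y : Euc N}
    (hy : y ∈ frontier Ω) (g : Euc N → ℝ) :
    ∫⁻ x in Ω, ENNReal.ofReal (K x y * g x) =
      ∫⁻ x, ENNReal.ofReal (K x y)
        ∂(volume.restrict Ω).withDensity fun x => ENNReal.ofReal (g x) := by
  rw [← lintegral_mul_eq_lintegral_withDensity _ (hK.aemeasurable_left hy).ennreal_ofReal
    (ae_of_all _ fun _ => ofReal_lt_top)]
  refine setLIntegral_congr_fun hΩ.measurableSet fun x hx => ?_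
  rw [ENNReal.ofReal_mul (hK.1 x hx y hy)]

theorem aemeasurable_setLIntegral_ofReal_mul (hΩ : IsOpen Ω) {ν : Measure (Euc N)}
    (hν : BoundaryMeasure Ω ν) (g : Euc N → ℝ) :
    AEMeasurable (fun y => ∫⁻ x in Ω, ENNReal.ofReal (K x y * g x)) ν := by
  have := hν.1
  refine ((hK.aemeasurable_ofReal_uncurry hΩ hν
    (withDensity_absolutelyContinuous _ fun x => ENNReal.ofReal (g x))).prod_swap
    |>.lintegral_prod_right').congr ?_
  filter_upwards [hν.ae_mem_frontier] with y hy
  exact (hK.setLIntegral_ofReal_mul_eq_lintegral_withDensity hΩ hy g).symm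

theorem setLIntegral_poissonPot_mul (hΩ : IsOpen Ω) (hΩ_bdd : Bornology.IsBounded Ω)
    {ν : Measure (Euc N)} (hν : BoundaryMeasure Ω ν) (g : Euc N → ℝ) :
    ∫⁻ x in Ω, poissonPot K ν x * ENNReal.ofReal (g x) =
      ∫⁻ y, (∫⁻ x in Ω, ENNReal.ofReal (K x y * g x)) ∂ν := by
  have := hν.1
  calc ∫⁻ x in Ω, poissonPot K ν x * ENNReal.ofReal (g x)
      = ∫⁻ x, poissonPot K ν x ∂(volume.restrict Ω).withDensity fun x => ENNReal.ofReal (g x) :=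
        lintegral_mul_eq_lintegral_withDensity _
          (hK.aemeasurable_ofReal_uncurry hΩ hν .rfl).lintegral_prod_right'
          ((ae_restrict_mem hΩ.measurableSet).mono fun x hx => hK.poissonPot_lt_top hΩ_bdd hν hx)
    _ = ∫⁻ y, ∫⁻ x, ENNReal.ofReal (K x y)
          ∂(volume.restrict Ω).withDensity (fun x => ENNReal.ofReal (g x)) ∂ν :=
        lintegral_lintegral_swap
          (hK.aemeasurable_ofReal_uncurry hΩ hν (withDensity_absolutelyContinuous _ _))
    _ = ∫⁻ y, (∫⁻ x in Ω, ENNReal.ofReal (K x y * g x)) ∂ν :=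
        lintegral_congr_ae (hν.ae_mem_frontier.mono fun y hy =>
          (hK.setLIntegral_ofReal_mul_eq_lintegral_withDensity hΩ hy g).symm)

end IsPoissonKernelFor

theorem good_measure_vanishes_on_ZV_iff_increasing_admissible_approximation_general
    {N : ℕ} (Ω : Set (Euc N)) (hΩ : IsC2Domain Ω)
    (V ρ : Euc N → ℝ) (nrm : Euc N → Euc N)
    (K : Euc N → Euc N → ℝ) (hK : IsPoissonKernelFor Ω (fun _ => 0) ρ nrm K)
    (μ : Measure (Euc N)) (hμ : BoundaryMeasure Ω μ) :
    μ (ZV Ω V ρ K) = 0 ↔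
      ∃ μn : ℕ → Measure (Euc N), (∀ n, BoundaryMeasure Ω (μn n)) ∧
        Monotone μn ∧ (∀ n, Admissible Ω V ρ K (μn n)) ∧
        ∀ f : Euc N → ℝ, Continuous f →
          Tendsto (fun n => ∫ y, f y ∂(μn n)) atTop (𝓝 (∫ y, f y ∂μ)) := by
  obtain ⟨hΩ_open, hΩ_bdd, -⟩ := hΩ
  have := hμ.1
  have admissible_iff : ∀ ν, BoundaryMeasure Ω ν → (Admissible Ω V ρ K ν ↔
      ∫⁻ y, (∫⁻ x in Ω, ENNReal.ofReal (K x y * (V x * ρ x))) ∂ν < ∞) := fun ν hν => by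
    rw [Admissible, hK.setLIntegral_poissonPot_mul hΩ_open hΩ_bdd hν]
  have hF_meas := fun ν (hν : BoundaryMeasure Ω ν) =>
    hK.aemeasurable_setLIntegral_ofReal_mul hΩ_open hν fun x => V x * ρ x
  rw [measure_ZV_eq_zero_iff hμ]
  constructor
  · intro hF_fin
    obtain ⟨μs, hmono, hle, hfin, hlim⟩ :=
      exists_monotone_lintegral_lt_top_tendsto_integral (hF_meas μ hμ) hF_fin
    exact ⟨μs, fun n => hμ.mono (hle n), hmono,
      fun n => (admissible_iff _ (hμ.mono (hle n))).2 (hfin n),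
      fun f hf => hlim f (hμ.integrable_of_continuousOn hΩ_bdd hf.continuousOn)⟩
  · rintro ⟨μs, hbdry, hmono, hadm, hlim⟩
    have := fun n => (hbdry n).1
    rw [← Measure.supOfMonotone_eq_of_tendsto_integral hmono fun f =>
      hlim _ (NNReal.continuous_coe.comp f.continuous)]
    exact Measure.ae_supOfMonotone hmono fun n =>
      ae_lt_top' (hF_meas _ (hbdry n)) ((admissible_iff _ (hbdry n)).1 (hadm n)).ne

/-- **Theorem 3.11.** Assume V ≥ 0 and let μ be a good positive bounded Radon measure
on ∂Ω.  Then μ(Z_V) = 0 if and only if there exists an increasing sequence {μ_n} of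
positive admissible measures converging to μ in the weak* topology. -/
theorem good_measure_vanishes_on_ZV_iff_increasing_admissible_approximation
    {N : ℕ} (hN : 2 ≤ N) (Ω : Set (Euc N)) (hΩ : IsC2Domain Ω)
    (V ρ : Euc N → ℝ) (hV0 : ∀ x ∈ Ω, 0 ≤ V x) (hVloc : LocBddOn Ω V)
    (hρ : IsFirstEigenfunction Ω ρ)
    (nrm : Euc N → Euc N) (hnrm : IsOuterNormal Ω nrm)
    (K : Euc N → Euc N → ℝ) (hK : IsPoissonKernelFor Ω (fun _ => 0) ρ nrm K)
    (μ : Measure (Euc N)) (hμ : BoundaryMeasure Ω μ)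
    (hgood : GoodMeasure Ω V ρ nrm μ) :
    μ (ZV Ω V ρ K) = 0 ↔
      ∃ μn : ℕ → Measure (Euc N), (∀ n, BoundaryMeasure Ω (μn n)) ∧
        Monotone μn ∧ (∀ n, Admissible Ω V ρ K (μn n)) ∧
        ∀ f : Euc N → ℝ, Continuous f →
          Tendsto (fun n => ∫ y, f y ∂(μn n)) atTop (𝓝 (∫ y, f y ∂μ)) :=
  good_measure_vanishes_on_ZV_iff_increasing_admissible_approximation_general Ω hΩ V ρ nrm K hK μ hμ
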